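/- Let f be a trigonometric polynomial of degree d and let N be a positive integer with N ≥ 8πd. Then (1/N) ∑_{m=1}^N |f((m−1)/N)| ≥ (1/2) ‖f‖_{L^1([0,1])}. -/

import Mathlib

open MeasureTheory

/-- `e z = e^{2πiz}`. -/
noncomputable def e (x : ℝ) : ℂ := Complex.exp (2 * Real.pi * Complex.I * x)

/-!
Convolution with the kernel `K(u) = πi (e(du) - e(-du)) |∑_{j<2d} e(ju)|²` differentiates every
trigonometric polynomial of degree `d`, because its Fourier coefficient at `n` is `2πin` for
`|n| ≤ d`; since `∫₀¹ |∑_{j<2d} e(ju)|² = 2d`, its L¹ norm is at most `4πd`, whence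
`‖f'‖₁ ≤ 4πd ‖f‖₁`. On a cell `[j/N, (j+1)/N]` we have `|f| ≤ |f(j/N)| + ∫_cell |f'|`, so
`‖f‖₁ ≤ (1/N) ∑_j |f(j/N)| + ‖f'‖₁ / N ≤ (1/N) ∑_j |f(j/N)| + (4πd/N) ‖f‖₁`, and `4πd/N ≤ 1/2`.
-/

open Complex ComplexConjugate Finset Real intervalIntegral

section Exponential

lemma e_add (x y : ℝ) : e (x + y) = e x * e y := by
  simp only [e, ← Complex.exp_add]; push_cast; ring_nf

@[simp]
lemma e_zero : e 0 = 1 := by simp [e]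

lemma e_intCast (k : ℤ) : e k = 1 := by
  rw [e, ← Complex.exp_int_mul_two_pi_mul_I k]; push_cast; ring_nf

lemma periodic_e_intCast_mul (k : ℤ) : Function.Periodic (fun u => e (k * u)) 1 := by
  intro u
  simp only [mul_add, mul_one, e_add, e_intCast]

lemma norm_e (x : ℝ) : ‖e x‖ = 1 := by
  rw [e, show (2 * π * I * x : ℂ) = (2 * π * x : ℝ) * I by push_cast; ring]
  exact norm_exp_ofReal_mul_I _

lemma conj_e (x : ℝ) : conj (e x) = e (-x) := by
  simp only [e, ← Complex.exp_conj, map_mul, map_ofNat, conj_ofReal, conj_I]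
  push_cast; ring_nf

@[fun_prop]
lemma continuous_e : Continuous e := by
  unfold e; fun_prop

lemma hasDerivAt_e_mul (c t : ℝ) :
    HasDerivAt (fun t : ℝ => e (c * t)) (2 * π * I * c * e (c * t)) t := by
  have h := (((hasDerivAt_id t).ofReal_comp).const_mul (2 * π * I * c)).cexp
  convert h using 1 <;> simp [e] <;> ring_nf

lemma integral_e_intCast_mul (k : ℤ) :
    ∫ s in (0 : ℝ)..1, e (k * s) = if k = 0 then 1 else 0 := by
  split_ifs with hk
  · simp [hk, e]
  · have hc : 2 * π * I * k ≠ 0 := by simp [hk, pi_ne_zero, I_ne_zero]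
    have hF : ∀ s : ℝ, HasDerivAt (fun s : ℝ => e (k * s) / (2 * π * I * k)) (e (k * s)) s :=
      fun s => ((hasDerivAt_e_mul k s).div_const _).congr_deriv (by field_simp; push_cast; ring)
    rw [integral_eq_sub_of_hasDerivAt (fun s _ => hF s)
      ((by fun_prop : Continuous fun s : ℝ => e (k * s)).intervalIntegrable 0 1)]
    simp only [mul_one, mul_zero, e_intCast, e_zero, sub_self]

end Exponential

section ExponentialSums

variable {ι : Type*} (S : Finset ι) (k : ι → ℤ)

lemma integral_sum_e_intCast_mul :
    ∫ s in (0 : ℝ)..1, ∑ i ∈ S, e (k i * s) = #{i ∈ S | k i = 0} := by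
  rw [integral_finsetSum (fun i _ => (by fun_prop : Continuous _).intervalIntegrable 0 1)]
  simp only [integral_e_intCast_mul, sum_boole]

lemma integral_e_mul_sum_e_sub (n : ℤ) (t : ℝ) :
    ∫ s in (0 : ℝ)..1, e (n * s) * ∑ i ∈ S, e (k i * (t - s)) = #{i ∈ S | k i = n} * e (n * t) := by
  have hsplit : ∀ s : ℝ, e (n * s) * ∑ i ∈ S, e (k i * (t - s))
      = ∑ i ∈ S, e (k i * t) * e (((n - k i : ℤ) : ℝ) * s) := fun s => by
    rw [mul_sum]; congr! 1 with i; rw [← e_add, ← e_add]; push_cast; ring_nf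
  simp only [hsplit]
  rw [integral_finsetSum (fun i _ => (by fun_prop : Continuous _).intervalIntegrable 0 1)]
  simp only [intervalIntegral.integral_const_mul, integral_e_intCast_mul, sub_eq_zero,
    natCast_card_filter, sum_mul]
  refine sum_congr rfl fun i _ => ?_
  rcases eq_or_ne (k i) n with h | h
  · simp [h]
  · simp [h, h.symm]

end ExponentialSums

lemma card_filter_sub_eq (m : ℕ) (k : ℤ) :
    #{p ∈ range m ×ˢ range m | (p.1 : ℤ) - p.2 = k} = (m - |k|).toNat := by
  have hcard : #(Ico (max 0 k) (min m (m + k))) = (m - |k|).toNat := by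
    rw [Int.card_Ico]; congr 1; rcases abs_cases k with h | h <;> omega
  rw [← hcard]
  refine card_nbij' (fun p => (p.1 : ℤ)) (fun j => (j.toNat, (j - k).toNat)) ?_ ?_ ?_ ?_ <;>
    intro x hx <;> simp [Prod.ext_iff] at hx ⊢ <;> omega

section Kernel

/-- `m` times the Fejér kernel of order `m`. -/
noncomputable def fejerSum (m : ℕ) (u : ℝ) : ℂ :=
  ∑ p ∈ range m ×ˢ range m, e (((p.1 : ℤ) - p.2 : ℤ) * u)

@[fun_prop]
lemma continuous_fejerSum (m : ℕ) : Continuous (fejerSum m) := by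
  unfold fejerSum; fun_prop

lemma fejerSum_eq_sq_norm (m : ℕ) (u : ℝ) :
    fejerSum m u = ((‖∑ j ∈ range m, e (j * u)‖ ^ 2 : ℝ) : ℂ) := by
  rw [ofReal_pow, ← Complex.mul_conj', map_sum, sum_mul_sum, ← sum_product', fejerSum]
  refine sum_congr rfl fun p _ => ?_
  rw [conj_e, ← e_add]; push_cast; ring_nf

lemma norm_fejerSum (m : ℕ) (u : ℝ) : ‖fejerSum m u‖ = fejerSum m u := by
  rw [fejerSum_eq_sq_norm, norm_real, norm_of_nonneg (sq_nonneg _)]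

lemma integral_norm_fejerSum (m : ℕ) : ∫ u in (0 : ℝ)..1, ‖fejerSum m u‖ = m := by
  have h := integral_sum_e_intCast_mul (range m ×ˢ range m) (fun p => (p.1 : ℤ) - p.2)
  rw [card_filter_sub_eq, abs_zero, sub_zero, Int.toNat_natCast] at h
  have hc : ((∫ u in (0 : ℝ)..1, ‖fejerSum m u‖ : ℝ) : ℂ) = m := by
    rw [← intervalIntegral.integral_ofReal]; simp only [norm_fejerSum]; exact h
  exact_mod_cast hc

noncomputable def derivKernel (d : ℕ) (u : ℝ) : ℂ :=
  π * I * (e (d * u) - e (-d * u)) * fejerSum (2 * d) u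

@[fun_prop]
lemma continuous_derivKernel (d : ℕ) : Continuous (derivKernel d) := by
  unfold derivKernel; fun_prop

lemma periodic_derivKernel (d : ℕ) : Function.Periodic (derivKernel d) 1 := by
  intro u
  have hd := periodic_e_intCast_mul d u
  have hnd := periodic_e_intCast_mul (-d) u
  have hF : fejerSum (2 * d) (u + 1) = fejerSum (2 * d) u :=
    sum_congr rfl fun p _ => periodic_e_intCast_mul _ u
  push_cast at hd hnd
  simp only [derivKernel, hd, hnd, hF]

lemma integral_norm_derivKernel_le (d : ℕ) : ∫ u in (0 : ℝ)..1, ‖derivKernel d u‖ ≤ 4 * π * d := by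
  have hle : ∀ u, ‖derivKernel d u‖ ≤ 2 * π * ‖fejerSum (2 * d) u‖ := fun u => by
    have h2 : ‖e (d * u) - e (-d * u)‖ ≤ 2 := (norm_sub_le _ _).trans (by simp [norm_e]; norm_num)
    rw [derivKernel, norm_mul, norm_mul, norm_mul, norm_real, norm_I, norm_of_nonneg pi_pos.le]
    calc π * 1 * ‖e (d * u) - e (-d * u)‖ * ‖fejerSum (2 * d) u‖
        ≤ π * 1 * 2 * ‖fejerSum (2 * d) u‖ := by gcongr
      _ = 2 * π * ‖fejerSum (2 * d) u‖ := by ring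
  calc ∫ u in (0 : ℝ)..1, ‖derivKernel d u‖
      ≤ ∫ u in (0 : ℝ)..1, 2 * π * ‖fejerSum (2 * d) u‖ :=
        integral_mono_on zero_le_one
          ((by fun_prop : Continuous fun u => ‖derivKernel d u‖).intervalIntegrable 0 1)
          ((by fun_prop : Continuous fun u => 2 * π * ‖fejerSum (2 * d) u‖).intervalIntegrable 0 1)
          fun u _ => hle u
    _ = 4 * π * d := by
        rw [intervalIntegral.integral_const_mul, integral_norm_fejerSum]; push_cast; ring

lemma derivKernel_eq_sum (d : ℕ) (u : ℝ) :
    derivKernel d u = π * I * (∑ p ∈ range (2 * d) ×ˢ range (2 * d), e (((d + (p.1 - p.2) : ℤ)) * u)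
      - ∑ p ∈ range (2 * d) ×ˢ range (2 * d), e (((-d + (p.1 - p.2) : ℤ)) * u)) := by
  rw [derivKernel, fejerSum, mul_assoc, sub_mul, mul_sum, mul_sum]
  congr 2 <;> refine sum_congr rfl fun p _ => ?_ <;> rw [← e_add] <;> push_cast <;> ring_nf

lemma integral_e_mul_derivKernel_sub {d : ℕ} {n : ℤ} (hn : |n| ≤ d) (t : ℝ) :
    ∫ s in (0 : ℝ)..1, e (n * s) * derivKernel d (t - s) = 2 * π * I * n * e (n * t) := by
  have hcount : ∀ c : ℤ, |n - c| ≤ 2 * d →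
      (#{p ∈ range (2 * d) ×ˢ range (2 * d) | c + ((p.1 : ℤ) - p.2) = n} : ℂ)
        = 2 * d - |n - c| := by
    intro c hc
    rw [filter_congr (q := fun p : ℕ × ℕ => (p.1 : ℤ) - p.2 = n - c) (fun p _ => by omega),
      card_filter_sub_eq, ← Int.cast_natCast, Int.toNat_of_nonneg (by push_cast; omega)]
    push_cast; ring
  have hsplit : ∀ s, e (n * s) * derivKernel d (t - s)
      = π * I * (e (n * s) *
          ∑ p ∈ range (2 * d) ×ˢ range (2 * d), e (((d + (p.1 - p.2) : ℤ)) * (t - s)))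
        - π * I * (e (n * s) *
          ∑ p ∈ range (2 * d) ×ˢ range (2 * d), e (((-d + (p.1 - p.2) : ℤ)) * (t - s))) :=
    fun s => by rw [derivKernel_eq_sum]; ring
  simp only [hsplit]
  rw [intervalIntegral.integral_sub, intervalIntegral.integral_const_mul,
    intervalIntegral.integral_const_mul, integral_e_mul_sum_e_sub, integral_e_mul_sum_e_sub, hcount d (by rw [abs_le] at hn ⊢; omega),
    hcount (-d) (by rw [abs_le] at hn ⊢; omega)]
  · rw [abs_le] at hn
    rw [abs_of_nonpos (by omega : n - d ≤ 0), abs_of_nonneg (by omega : 0 ≤ n - -d)]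
    push_cast; ring
  all_goals apply Continuous.intervalIntegrable; fun_prop

end Kernel

lemma integral_norm_conv_le_of_periodic {f K : ℝ → ℂ} (hf : Continuous f) (hK : Continuous K)
    (hKper : Function.Periodic K 1) :
    ∫ t in (0 : ℝ)..1, ‖∫ s in (0 : ℝ)..1, f s * K (t - s)‖
      ≤ (∫ s in (0 : ℝ)..1, ‖f s‖) * ∫ u in (0 : ℝ)..1, ‖K u‖ := by
  have hH : Continuous (Function.uncurry fun t s => ‖f s‖ * ‖K (t - s)‖) := by fun_prop
  have hshift : ∀ s, ∫ t in (0 : ℝ)..1, ‖K (t - s)‖ = ∫ u in (0 : ℝ)..1, ‖K u‖ := fun s => by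
    rw [integral_comp_sub_right (fun u => ‖K u‖), show (1 : ℝ) - s = 0 - s + 1 by ring]
    simpa using (hKper.comp norm).intervalIntegral_add_eq (0 - s) 0
  calc ∫ t in (0 : ℝ)..1, ‖∫ s in (0 : ℝ)..1, f s * K (t - s)‖
      ≤ ∫ t in (0 : ℝ)..1, ∫ s in (0 : ℝ)..1, ‖f s‖ * ‖K (t - s)‖ := by
        refine integral_mono_on zero_le_one ?_ ?_ fun t _ => ?_
        · apply Continuous.intervalIntegrable
          exact (continuous_parametric_intervalIntegral_of_continuous'
            (by fun_prop : Continuous (Function.uncurry fun t s => f s * K (t - s))) 0 1).norm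
        · exact (continuous_parametric_intervalIntegral_of_continuous' hH 0 1).intervalIntegrable _ _
        · simpa only [norm_mul] using norm_integral_le_integral_norm (μ := volume)
            (f := fun s => f s * K (t - s)) zero_le_one
    _ = ∫ s in (0 : ℝ)..1, ∫ t in (0 : ℝ)..1, ‖f s‖ * ‖K (t - s)‖ :=
        intervalIntegral_intervalIntegral_swap
          ((hH.continuousOn.integrableOn_compact (isCompact_Icc.prod isCompact_Icc)).mono_set
            (Set.prod_mono Set.uIoc_subset_uIcc Set.uIoc_subset_uIcc))
    _ = (∫ s in (0 : ℝ)..1, ‖f s‖) * ∫ u in (0 : ℝ)..1, ‖K u‖ := by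
        simp only [intervalIntegral.integral_const_mul, hshift, intervalIntegral.integral_mul_const]

section TrigPoly

variable (d : ℕ) (a : ℤ → ℂ)

noncomputable def trigPoly (t : ℝ) : ℂ := ∑ n ∈ Icc (-(d : ℤ)) d, a n * e (n * t)

@[fun_prop]
lemma continuous_trigPoly : Continuous (trigPoly d a) := by
  unfold trigPoly; fun_prop

lemma hasDerivAt_trigPoly (t : ℝ) :
    HasDerivAt (trigPoly d a) (trigPoly d (fun n => 2 * π * I * n * a n) t) t := by
  unfold trigPoly
  refine HasDerivAt.fun_sum fun n _ => ((hasDerivAt_e_mul n t).const_mul (a n)).congr_deriv ?_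
  push_cast; ring

lemma trigPoly_deriv_eq_integral_mul_derivKernel (t : ℝ) :
    trigPoly d (fun n => 2 * π * I * n * a n) t
      = ∫ s in (0 : ℝ)..1, trigPoly d a s * derivKernel d (t - s) := by
  simp only [trigPoly, sum_mul, mul_assoc]
  rw [intervalIntegral.integral_finsetSum fun n _ => by
    apply Continuous.intervalIntegrable; fun_prop]
  refine sum_congr rfl fun n hn => ?_
  rw [intervalIntegral.integral_const_mul, integral_e_mul_derivKernel_sub _ t]
  · ring
  · rw [mem_Icc] at hn; exact abs_le.mpr hn

theorem integral_norm_deriv_trigPoly_le :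
    ∫ t in (0 : ℝ)..1, ‖trigPoly d (fun n => 2 * π * I * n * a n) t‖
      ≤ 4 * π * d * ∫ t in (0 : ℝ)..1, ‖trigPoly d a t‖ := by
  simp only [trigPoly_deriv_eq_integral_mul_derivKernel]
  refine (integral_norm_conv_le_of_periodic (continuous_trigPoly d a) (continuous_derivKernel d)
    (periodic_derivKernel d)).trans ?_
  rw [mul_comm]
  gcongr
  · exact integral_nonneg zero_le_one fun _ _ => norm_nonneg _
  · exact integral_norm_derivKernel_le d

end TrigPoly

section Sampling

variable {E : Type*} [NormedAddCommGroup E] [NormedSpace ℝ E] [CompleteSpace E] {f f' : ℝ → E}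

lemma integral_norm_le_of_hasDerivAt {a b : ℝ} (hab : a ≤ b)
    (hf : ∀ x ∈ Set.Icc a b, HasDerivAt f (f' x) x) (hf' : IntervalIntegrable f' volume a b) :
    ∫ x in a..b, ‖f x‖ ≤ (b - a) * (‖f a‖ + ∫ x in a..b, ‖f' x‖) := by
  have hcont : ContinuousOn f (Set.uIcc a b) := fun x hx =>
    (hf x (Set.uIcc_of_le hab ▸ hx)).continuousAt.continuousWithinAt
  have hpt : ∀ t ∈ Set.Icc a b, ‖f t‖ ≤ ‖f a‖ + ∫ x in a..b, ‖f' x‖ := by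
    rintro t ⟨hat, htb⟩
    have hsub : Set.uIcc a t ⊆ Set.uIcc a b :=
      Set.uIcc_subset_uIcc_left (Set.mem_uIcc_of_le hat htb)
    have hftc : ∫ x in a..t, f' x = f t - f a :=
      integral_eq_sub_of_hasDerivAt (fun x hx => hf x (Set.uIcc_of_le hab ▸ hsub hx))
        (hf'.mono_set hsub)
    calc ‖f t‖ ≤ ‖f a‖ + ‖f t - f a‖ := norm_le_insert' _ _
      _ ≤ ‖f a‖ + ∫ x in a..t, ‖f' x‖ := by
        gcongr; rw [← hftc]; exact norm_integral_le_integral_norm hat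
      _ ≤ ‖f a‖ + ∫ x in a..b, ‖f' x‖ := by
        gcongr
        exact integral_mono_interval le_rfl hat htb
          (Filter.Eventually.of_forall fun _ => norm_nonneg _) hf'.norm
  calc ∫ x in a..b, ‖f x‖ ≤ ∫ _ in a..b, (‖f a‖ + ∫ x in a..b, ‖f' x‖) :=
        integral_mono_on hab hcont.norm.intervalIntegrable intervalIntegrable_const hpt
    _ = (b - a) * (‖f a‖ + ∫ x in a..b, ‖f' x‖) := by
        rw [intervalIntegral.integral_const, smul_eq_mul]

lemma integral_norm_le_sum_sample (hf : ∀ x ∈ Set.Icc 0 1, HasDerivAt f (f' x) x)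
    (hf' : IntervalIntegrable f' volume 0 1) {N : ℕ} (hN : 0 < N) :
    ∫ x in (0 : ℝ)..1, ‖f x‖
      ≤ (1 / N) * ∑ j ∈ range N, ‖f (j / N)‖ + (1 / N) * ∫ x in (0 : ℝ)..1, ‖f' x‖ := by
  have hNpos : (0 : ℝ) < N := by exact_mod_cast hN
  set p : ℕ → ℝ := fun j => j / N
  have hp0 : p 0 = 0 := by simp [p]
  have hpN : p N = 1 := by simp [p, hNpos.ne']
  have hpmono : Monotone p := fun i j hij => by simp only [p]; gcongr
  have hstep : ∀ j, p (j + 1) - p j = 1 / N := fun j => by simp only [p]; push_cast; ring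
  have hsub : ∀ j < N, Set.Icc (p j) (p (j + 1)) ⊆ Set.Icc 0 1 := fun j hj =>
    Set.Icc_subset_Icc (hp0 ▸ hpmono (Nat.zero_le j)) (hpN ▸ hpmono hj)
  have hsub' : ∀ j < N, Set.uIcc (p j) (p (j + 1)) ⊆ Set.uIcc 0 1 := fun j hj => by
    rw [Set.uIcc_of_le (hpmono j.le_succ), Set.uIcc_of_le zero_le_one]; exact hsub j hj
  have hsplit : ∀ g : ℝ → ℝ, IntervalIntegrable g volume 0 1 →
      ∫ x in (0 : ℝ)..1, g x = ∑ j ∈ range N, ∫ x in p j..p (j + 1), g x := fun g hg => by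
    rw [sum_integral_adjacent_intervals fun j hj => hg.mono_set (hsub' j hj), hp0, hpN]
  have hfc : ContinuousOn f (Set.uIcc 0 1) := fun x hx =>
    (hf x (Set.uIcc_of_le (zero_le_one (α := ℝ)) ▸ hx)).continuousAt.continuousWithinAt
  rw [hsplit _ hfc.norm.intervalIntegrable, hsplit _ hf'.norm, mul_sum, mul_sum, ← sum_add_distrib]
  refine sum_le_sum fun j hj => ?_
  have hj : j < N := mem_range.mp hj
  calc ∫ x in p j..p (j + 1), ‖f x‖
      ≤ (p (j + 1) - p j) * (‖f (p j)‖ + ∫ x in p j..p (j + 1), ‖f' x‖) :=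
        integral_norm_le_of_hasDerivAt (hpmono j.le_succ) (fun x hx => hf x (hsub j hj hx))
          (hf'.mono_set (hsub' j hj))
    _ = _ := by rw [hstep, mul_add]

end Sampling

/-- If `f` is a trigonometric polynomial of degree `d` and `N ≥ 8πd` is a positive integer,
then `(1/N) ∑_{m=1}^N |f((m−1)/N)| ≥ (1/2) ‖f‖_{L^1([0,1])}`. -/
theorem quadrature_lower_bound
    (d : ℕ) (a : ℤ → ℂ) (f : ℝ → ℂ)
    (hf : ∀ t : ℝ, f t = ∑ n ∈ Finset.Icc (-(d : ℤ)) (d : ℤ), a n * e ((n : ℝ) * t))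
    (N : ℕ) (hN : 0 < N) (hNd : 8 * Real.pi * (d : ℝ) ≤ (N : ℝ)) :
    (1 / (N : ℝ)) * ∑ m ∈ Finset.Icc 1 N, ‖f (((m : ℝ) - 1) / (N : ℝ))‖ ≥
      (1 / 2) * ∫ t in (0:ℝ)..1, ‖f t‖ := by
  obtain rfl : f = trigPoly d a := funext hf
  have hsample := integral_norm_le_sum_sample (fun t _ => hasDerivAt_trigPoly d a t)
    ((continuous_trigPoly d _).intervalIntegrable 0 1) hN
  have hbernstein := integral_norm_deriv_trigPoly_le d a
  have hreindex : ∑ m ∈ Icc 1 N, ‖trigPoly d a ((m - 1) / N)‖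
      = ∑ j ∈ range N, ‖trigPoly d a (j / N)‖ := by
    rw [← Ico_add_one_right_eq_Icc, sum_Ico_eq_sum_range, Nat.add_sub_cancel]
    simp [add_sub_cancel_left]
  have hNpos : (0 : ℝ) < N := by exact_mod_cast hN
  have hA : 0 ≤ ∫ t in (0 : ℝ)..1, ‖trigPoly d a t‖ :=
    integral_nonneg zero_le_one fun _ _ => norm_nonneg _
  have hderiv : (1 / N) * ∫ t in (0 : ℝ)..1, ‖trigPoly d (fun n => 2 * π * I * n * a n) t‖
      ≤ (1 / 2) * ∫ t in (0 : ℝ)..1, ‖trigPoly d a t‖ := by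
    rw [one_div_mul_eq_div, div_le_iff₀ hNpos]
    nlinarith [mul_le_mul_of_nonneg_right hNd hA]
  rw [hreindex, ge_iff_le]
  linarith
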